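/- arXiv:math-ph/0302001 — 2 statements merged into one kernel-verified Lean document; each statement's English description precedes it below -/
import Mathlib

section
/- Let g : ℝ≥0 → ℝ be continuously differentiable with g(y) ≥ a₁ > 0 and g(y) + 2 g'(y) y ≥ a₃ > 0 for all y ≥ 0. Then for all vectors a, b ∈ ℝᵐ, ⟨g(|a|²) a − g(|b|²) b, a − b⟩ ≥ min(a₁, a₃) |a − b|². -/
/-!
Along the segment `t ↦ b + t • (a - b)` the scalar function
`γ t = g (‖b + t • h‖ ^ 2) * ⟪b + t • h, h⟫` (with `h = a - b`) has derivative
`2 g'(y) ⟪x, h⟫² + g(y) ‖h‖²` at `x = b + t • h`, `y = ‖x‖²`. If `g'(y) ≥ 0` this is at least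
`a₁ ‖h‖²`; otherwise Cauchy–Schwarz `⟪x, h⟫² ≤ y ‖h‖²` bounds it below by
`(g(y) + 2 g'(y) y) ‖h‖² ≥ a₃ ‖h‖²`. The mean value inequality on `[0, 1]` concludes.
-/

open scoped RealInnerProductSpace

lemma min_mul_le_two_mul_mul_sq_add {G D y v s a₁ a₃ : ℝ} (hs : 0 ≤ s) (hv : v ^ 2 ≤ y * s)
    (hG : a₁ ≤ G) (hGD : a₃ ≤ G + 2 * D * y) :
    min a₁ a₃ * s ≤ 2 * D * v ^ 2 + G * s := by
  rcases le_or_gt 0 D with hD | hD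
  · calc min a₁ a₃ * s ≤ a₁ * s := by gcongr; exact min_le_left _ _
      _ ≤ G * s := by gcongr
      _ ≤ 2 * D * v ^ 2 + G * s := by nlinarith [sq_nonneg v]
  · calc min a₁ a₃ * s ≤ a₃ * s := by gcongr; exact min_le_right _ _
      _ ≤ (G + 2 * D * y) * s := by gcongr
      _ ≤ 2 * D * v ^ 2 + G * s := by nlinarith

section

variable {E : Type*} [NormedAddCommGroup E] [InnerProductSpace ℝ E]

lemma min_mul_norm_sq_le {g g' : ℝ → ℝ} {a₁ a₃ : ℝ}
    (hlow : ∀ y ≥ (0 : ℝ), g y ≥ a₁) (hmono : ∀ y ≥ (0 : ℝ), g y + 2 * g' y * y ≥ a₃)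
    (x h : E) :
    min a₁ a₃ * ‖h‖ ^ 2 ≤ 2 * g' (‖x‖ ^ 2) * ⟪x, h⟫ ^ 2 + g (‖x‖ ^ 2) * ‖h‖ ^ 2 := by
  have hcs : ⟪x, h⟫ ^ 2 ≤ ‖x‖ ^ 2 * ‖h‖ ^ 2 := by
    rw [← mul_pow]
    exact sq_le_sq' (neg_le_of_abs_le (abs_real_inner_le_norm x h)) (real_inner_le_norm x h)
  exact min_mul_le_two_mul_mul_sq_add (by positivity) hcs (hlow _ (by positivity))
    (hmono _ (by positivity))

lemma hasDerivAt_mul_inner_along_line {g g' : ℝ → ℝ}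
    (hderiv : ∀ y ≥ (0 : ℝ), HasDerivAt g (g' y) y) (b h : E) (t : ℝ) :
    HasDerivAt (fun s : ℝ => g (‖b + s • h‖ ^ 2) * ⟪b + s • h, h⟫)
      (2 * g' (‖b + t • h‖ ^ 2) * ⟪b + t • h, h⟫ ^ 2 + g (‖b + t • h‖ ^ 2) * ‖h‖ ^ 2) t := by
  have hline : HasDerivAt (fun s : ℝ => b + s • h) h t := by
    simpa using ((hasDerivAt_id t).smul_const h).const_add b
  have hnorm := (hderiv _ (by positivity)).comp t hline.norm_sq
  have hinner : HasDerivAt (fun s : ℝ => ⟪b + s • h, h⟫) (‖h‖ ^ 2) t := by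
    simpa [real_inner_self_eq_norm_sq] using hline.inner ℝ (hasDerivAt_const t h)
  exact (hnorm.mul hinner).congr_deriv (by simp only [Function.comp_apply]; ring)

end

theorem stmt1_general (m : ℕ) (g g' : ℝ → ℝ) (a₁ a₃ : ℝ)
    (hderiv : ∀ y ≥ (0:ℝ), HasDerivAt g (g' y) y)
    (hlow : ∀ y ≥ (0:ℝ), g y ≥ a₁)
    (hmono : ∀ y ≥ (0:ℝ), g y + 2 * g' y * y ≥ a₃)
    (a b : EuclideanSpace ℝ (Fin m)) :
    inner ℝ (g (‖a‖ ^ 2) • a - g (‖b‖ ^ 2) • b) (a - b) ≥ min a₁ a₃ * ‖a - b‖ ^ 2 := by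
  set h := a - b
  set γ : ℝ → ℝ := fun s => g (‖b + s • h‖ ^ 2) * ⟪b + s • h, h⟫
  have hγ := hasDerivAt_mul_inner_along_line hderiv b h
  have hmvt := mul_sub_le_image_sub_of_le_deriv (f := γ) (fun t => (hγ t).differentiableAt)
    (fun t => (hγ t).deriv ▸ min_mul_norm_sq_le hlow hmono _ h) zero_le_one
  have hend : b + h = a := add_sub_cancel b a
  simpa [γ, hend, inner_sub_left, real_inner_smul_left] using hmvt

theorem stmt1 (m : ℕ) (g g' : ℝ → ℝ) (a₁ a₃ : ℝ) (ha₁ : 0 < a₁) (ha₃ : 0 < a₃)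
    (hderiv : ∀ y ≥ (0:ℝ), HasDerivAt g (g' y) y)
    (hcont : ContinuousOn g' (Set.Ici 0))
    (hlow : ∀ y ≥ (0:ℝ), g y ≥ a₁)
    (hmono : ∀ y ≥ (0:ℝ), g y + 2 * g' y * y ≥ a₃)
    (a b : EuclideanSpace ℝ (Fin m)) :
    inner ℝ (g (‖a‖ ^ 2) • a - g (‖b‖ ^ 2) • b) (a - b) ≥ min a₁ a₃ * ‖a - b‖ ^ 2 :=
  stmt1_general m g g' a₁ a₃ hderiv hlow hmono a b
end

section
/- Let g : ℝ≥0 → ℝ be continuously differentiable with a₁ ≤ g(y) ≤ a₂, g(y) + 2g'(y)y ≥ a₃, and |g'(y)|y ≤ a₄ for all y ≥ 0 (a₁,…,a₄ > 0). Then the map F : ℝᵐ → ℝᵐ, F(z) = g(|z|²) z, is a bijection of ℝᵐ onto itself, with inverse Lipschitz continuous with constant 1/min(a₁, a₃). -/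
/-!
Along the segment `z t = b + t • (a - b)`, the derivative of `t ↦ ⟪F (z t), a - b⟫` is
`2 g'(q) ⟪z t, a - b⟫² + g(q) ‖a - b‖²` with `q = ‖z t‖²`; by Cauchy–Schwarz it is at least
`min a₁ a₃ ‖a - b‖²` (use `g ≥ a₁` when `g' ≥ 0`, and `g + 2 g' q ≥ a₃` when `g' < 0`).
The mean value inequality on `[0, 1]` makes `F` strongly monotone, hence antilipschitz.
`F` maps each ray from the origin into itself, acting on the radius as `t ↦ g(t²) t`, which is
continuous, vanishes at `0` and is at least `a₁ t`; the intermediate value theorem gives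
surjectivity.
-/

open RealInnerProductSpace

lemma le_two_mul_mul_sq_add_mul {c G G' y s n : ℝ} (hn : 0 ≤ n) (hs : s ^ 2 ≤ y * n)
    (hG : c ≤ G) (hG' : c ≤ G + 2 * G' * y) : c * n ≤ 2 * G' * s ^ 2 + G * n := by
  rcases le_or_gt 0 G' with hpos | hneg
  · nlinarith [sq_nonneg s]
  · nlinarith

section RadialMap

variable {E : Type*} [NormedAddCommGroup E] [InnerProductSpace ℝ E]

lemma hasDerivAt_inner_smul_line {g : ℝ → ℝ} {d : ℝ} (b h : E) (t : ℝ)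
    (hg : HasDerivAt g d (‖b + t • h‖ ^ 2)) :
    HasDerivAt (fun s : ℝ => ⟪g (‖b + s • h‖ ^ 2) • (b + s • h), h⟫)
      (2 * d * ⟪b + t • h, h⟫ ^ 2 + g (‖b + t • h‖ ^ 2) * ‖h‖ ^ 2) t := by
  have hline : HasDerivAt (fun s : ℝ => b + s • h) h t := by
    simpa using ((hasDerivAt_id t).smul_const h).const_add b
  have hnormsq : HasDerivAt (fun s : ℝ => ‖b + s • h‖ ^ 2) (2 * ⟪b + t • h, h⟫) t := by
    simpa [real_inner_comm, two_mul] using hline.norm_sq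
  have hproj : HasDerivAt (fun s : ℝ => ⟪b + s • h, h⟫) (‖h‖ ^ 2) t := by
    simpa [real_inner_self_eq_norm_sq] using hline.inner ℝ (hasDerivAt_const t h)
  simp only [real_inner_smul_left]
  exact ((hg.comp t hnormsq).mul hproj).congr_deriv (by simp only [Function.comp_apply]; ring)

lemma inner_radial_sub_ge {g g' : ℝ → ℝ} {c : ℝ}
    (hderiv : ∀ y ≥ (0:ℝ), HasDerivAt g (g' y) y)
    (hc : ∀ y ≥ (0:ℝ), c ≤ g y ∧ c ≤ g y + 2 * g' y * y) (a b : E) :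
    c * ‖a - b‖ ^ 2 ≤ ⟪g (‖a‖ ^ 2) • a - g (‖b‖ ^ 2) • b, a - b⟫ := by
  set h := a - b
  have hφ (t : ℝ) := hasDerivAt_inner_smul_line b h t (hderiv _ (sq_nonneg _))
  have hφ' (t : ℝ) :
      c * ‖h‖ ^ 2 ≤ deriv (fun s : ℝ => ⟪g (‖b + s • h‖ ^ 2) • (b + s • h), h⟫) t := by
    obtain ⟨hg, hg'⟩ := hc _ (sq_nonneg ‖b + t • h‖)
    have hcs : ⟪b + t • h, h⟫ ^ 2 ≤ ‖b + t • h‖ ^ 2 * ‖h‖ ^ 2 := by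
      rw [← mul_pow]
      exact sq_le_sq' (abs_le.1 (abs_real_inner_le_norm _ _)).1 (real_inner_le_norm _ _)
    rw [(hφ t).deriv]
    exact le_two_mul_mul_sq_add_mul (sq_nonneg _) hcs hg hg'
  have := mul_sub_le_image_sub_of_le_deriv (fun t => (hφ t).differentiableAt) hφ' zero_le_one
  simpa [h, inner_sub_left, real_inner_smul_left] using this

lemma antilipschitzWith_of_inner_sub_ge {f : E → E} {c : ℝ} (hc : 0 < c)
    (hf : ∀ a b, c * ‖a - b‖ ^ 2 ≤ ⟪f a - f b, a - b⟫) :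
    AntilipschitzWith (Real.toNNReal c⁻¹) f := by
  refine AntilipschitzWith.of_le_mul_dist fun a b => ?_
  rw [Real.coe_toNNReal _ (inv_nonneg.2 hc.le), dist_eq_norm, dist_eq_norm,
    ← div_eq_inv_mul, le_div_iff₀ hc]
  rcases (norm_nonneg (a - b)).eq_or_lt with hab | hab
  · rw [← hab, zero_mul]; positivity
  · refine le_of_mul_le_mul_right ?_ hab
    calc ‖a - b‖ * c * ‖a - b‖ = c * ‖a - b‖ ^ 2 := by ring
      _ ≤ ⟪f a - f b, a - b⟫ := hf a b
      _ ≤ ‖f a - f b‖ * ‖a - b‖ := real_inner_le_norm _ _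

end RadialMap

lemma exists_mul_eq_of_le_of_continuousOn {g : ℝ → ℝ} {a : ℝ} (ha : 0 < a)
    (hg : ContinuousOn g (Set.Ici 0)) (hlb : ∀ y ≥ (0:ℝ), a ≤ g y) {r : ℝ} (hr : 0 ≤ r) :
    ∃ t ≥ (0:ℝ), g (t ^ 2) * t = r := by
  set T := r / a
  have hT : 0 ≤ T := div_nonneg hr ha.le
  have hcont : ContinuousOn (fun t : ℝ => g (t ^ 2) * t) (Set.Icc 0 T) :=
    (hg.comp (continuous_pow 2).continuousOn fun t _ => sq_nonneg t).mul continuousOn_id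
  have hTr : r ≤ g (T ^ 2) * T := calc
    r = a * T := (mul_div_cancel₀ r ha.ne').symm
    _ ≤ g (T ^ 2) * T := mul_le_mul_of_nonneg_right (hlb _ (sq_nonneg T)) hT
  obtain ⟨t, ht, hgt⟩ := intermediate_value_Icc hT hcont ⟨by simpa using hr, hTr⟩
  exact ⟨t, ht.1, hgt⟩

lemma surjective_smul_of_le_of_continuousOn {E : Type*} [NormedAddCommGroup E] [NormedSpace ℝ E]
    {g : ℝ → ℝ} {a : ℝ} (ha : 0 < a) (hg : ContinuousOn g (Set.Ici 0))
    (hlb : ∀ y ≥ (0:ℝ), a ≤ g y) : Function.Surjective fun z : E => g (‖z‖ ^ 2) • z := by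
  intro w
  rcases eq_or_ne w 0 with rfl | hw
  · exact ⟨0, by simp⟩
  have hw' : 0 < ‖w‖ := norm_pos_iff.2 hw
  obtain ⟨t, ht, hgt⟩ := exists_mul_eq_of_le_of_continuousOn ha hg hlb (norm_nonneg w)
  refine ⟨(t / ‖w‖) • w, ?_⟩
  have hnorm : ‖(t / ‖w‖) • w‖ = t := by
    rw [norm_smul, Real.norm_of_nonneg (by positivity), div_mul_cancel₀ _ hw'.ne']
  show g (‖(t / ‖w‖) • w‖ ^ 2) • (t / ‖w‖) • w = w
  rw [hnorm, smul_smul, mul_div_assoc', hgt, div_self hw'.ne', one_smul]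

theorem stmt15_general (m : ℕ) (g g' : ℝ → ℝ) (a₁ a₂ a₃ : ℝ)
    (ha₁ : 0 < a₁) (ha₃ : 0 < a₃)
    (hderiv : ∀ y ≥ (0:ℝ), HasDerivAt g (g' y) y)
    (hbounds : ∀ y ≥ (0:ℝ), a₁ ≤ g y ∧ g y ≤ a₂)
    (hmono : ∀ y ≥ (0:ℝ), g y + 2 * g' y * y ≥ a₃) :
    Function.Bijective (fun z : EuclideanSpace ℝ (Fin m) => g (‖z‖ ^ 2) • z) ∧
    ∀ a b : EuclideanSpace ℝ (Fin m),
      ‖a - b‖ ≤ (1 / min a₁ a₃) * ‖g (‖a‖ ^ 2) • a - g (‖b‖ ^ 2) • b‖ := by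
  have hc : 0 < min a₁ a₃ := lt_min ha₁ ha₃
  have hanti : AntilipschitzWith (Real.toNNReal (min a₁ a₃)⁻¹)
      fun z : EuclideanSpace ℝ (Fin m) => g (‖z‖ ^ 2) • z :=
    antilipschitzWith_of_inner_sub_ge hc <| inner_radial_sub_ge hderiv fun y hy =>
      ⟨(min_le_left _ _).trans (hbounds y hy).1, (min_le_right _ _).trans (hmono y hy)⟩
  have hgcont : ContinuousOn g (Set.Ici 0) := fun y hy =>
    (hderiv y hy).continuousAt.continuousWithinAt
  refine ⟨⟨hanti.injective, surjective_smul_of_le_of_continuousOn ha₁ hgcont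
    fun y hy => (hbounds y hy).1⟩, fun a b => ?_⟩
  simpa [dist_eq_norm, Real.coe_toNNReal _ (inv_nonneg.2 hc.le)] using hanti.le_mul_dist a b

theorem stmt15 (m : ℕ) (g g' : ℝ → ℝ) (a₁ a₂ a₃ a₄ : ℝ)
    (ha₁ : 0 < a₁) (ha₂ : 0 < a₂) (ha₃ : 0 < a₃) (ha₄ : 0 < a₄)
    (hderiv : ∀ y ≥ (0:ℝ), HasDerivAt g (g' y) y)
    (hcont : ContinuousOn g' (Set.Ici 0))
    (hbounds : ∀ y ≥ (0:ℝ), a₁ ≤ g y ∧ g y ≤ a₂)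
    (hmono : ∀ y ≥ (0:ℝ), g y + 2 * g' y * y ≥ a₃)
    (hbd : ∀ y ≥ (0:ℝ), |g' y| * y ≤ a₄) :
    Function.Bijective (fun z : EuclideanSpace ℝ (Fin m) => g (‖z‖ ^ 2) • z) ∧
    ∀ a b : EuclideanSpace ℝ (Fin m),
      ‖a - b‖ ≤ (1 / min a₁ a₃) * ‖g (‖a‖ ^ 2) • a - g (‖b‖ ^ 2) • b‖ :=
  stmt15_general m g g' a₁ a₂ a₃ ha₁ ha₃ hderiv hbounds hmono
end
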